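/- Let s be a random variable on a finite probability space taking values in a finite set S, and let ω^1,…,ω^n be random variables taking values in finite sets that are mutually conditionally independent given s. Then the set function f(ι) = I(s; ∪_{i∈ι} ω^i) satisfies f(∅) = 0, is monotone nondecreasing, and is submodular on subsets of {1,…,n}. -/

import Mathlib

/-!
Write `I(X;Y|Z) = H(X,Z) + H(Y,Z) - H(X,Y,Z) - H(Z)`. It is the Kullback–Leibler divergence of
the law of `(X,Y,Z)` from `P(z) P(x|z) P(y|z)`, hence nonnegative by Gibbs' inequality, and it
vanishes when `X` and `Y` are conditionally independent given `Z`. Nonnegativity with `Z` a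
function of `Y` says that conditioning on more reduces entropy, which gives monotonicity.
Conditional independence of `ω^j` and `ω_ι` given `s` makes the gain `f(ι ∪ {j}) - f(ι)`
equal to `H(ω^j | ω_ι) - H(ω^j | s)`, which is antitone in `ι` for the same reason: this is
submodularity.
-/

open Finset

/-- A probability mass function on a finite sample space `Ω`. -/
structure FinProb (Ω : Type*) [Fintype Ω] where
  pr : Ω → ℝ
  nonneg : ∀ x, 0 ≤ pr x
  sum_one : ∑ x, pr x = 1

variable {Ω : Type*} [Fintype Ω]

/-- The probability that the random variable `X` takes the value `v`. -/
def FinProb.probEq (μ : FinProb Ω) {S : Type*} [DecidableEq S] (X : Ω → S) (v : S) : ℝ :=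
  ∑ x, if X x = v then μ.pr x else 0

/-- Shannon entropy (natural logarithm) of a random variable with values in a finite type. -/
noncomputable def FinProb.entropy (μ : FinProb Ω) {S : Type*} [Fintype S] [DecidableEq S]
    (X : Ω → S) : ℝ :=
  ∑ v, Real.negMulLog (μ.probEq X v)

/-- Conditional Shannon entropy `H(X|Y) = H(X,Y) - H(Y)`. -/
noncomputable def FinProb.condEntropy (μ : FinProb Ω) {S T : Type*} [Fintype S] [DecidableEq S]
    [Fintype T] [DecidableEq T] (X : Ω → S) (Y : Ω → T) : ℝ :=
  μ.entropy (fun x => (X x, Y x)) - μ.entropy Y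

/-- Mutual information `I(X;Y) = H(X) - H(X|Y)`. -/
noncomputable def FinProb.mutualInfo (μ : FinProb Ω) {S T : Type*} [Fintype S] [DecidableEq S]
    [Fintype T] [DecidableEq T] (X : Ω → S) (Y : Ω → T) : ℝ :=
  μ.entropy X - μ.condEntropy X Y

/-- The joint random variable `∪_{i ∈ ι} ω^i`, i.e. the tuple of the `ω^i` for `i ∈ ι`. -/
def tupleRV {n : ℕ} {W : Fin n → Type*} (ωs : ∀ i, Ω → W i) (ι : Finset (Fin n)) :
    Ω → (∀ i : ι, W i) :=
  fun x i => ωs i x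

/-- The random variables `ω^1, …, ω^n` are mutually conditionally independent given `s` :
for all disjoint index sets `I, J ⊆ {1,…,n}` and all values `a`, `b`, `v`,
`Pr(ω_I = a, ω_J = b, s = v) · Pr(s = v) = Pr(ω_I = a, s = v) · Pr(ω_J = b, s = v)`
(this is the product formula for the conditional probabilities, cleared of denominators). -/
def CondIndepGiven (μ : FinProb Ω) {S : Type*} [DecidableEq S] {n : ℕ}
    {W : Fin n → Type*} [∀ i, DecidableEq (W i)]
    (s : Ω → S) (ωs : ∀ i, Ω → W i) : Prop :=
  ∀ I J : Finset (Fin n), Disjoint I J →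
    ∀ (a : ∀ i : I, W i) (b : ∀ j : J, W j) (v : S),
      μ.probEq (fun x => (tupleRV ωs I x, tupleRV ωs J x, s x)) (a, b, v) * μ.probEq s v =
        μ.probEq (fun x => (tupleRV ωs I x, s x)) (a, v) *
          μ.probEq (fun x => (tupleRV ωs J x, s x)) (b, v)

/-- Kullback–Leibler divergence `D_KL(p‖q) = Σ_x p(x) log(p(x)/q(x))` (natural logarithm)
between finitely supported distributions. -/
noncomputable def klDiv {S : Type*} [Fintype S] (p q : S → ℝ) : ℝ :=
  ∑ x, p x * Real.log (p x / q x)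

/-- The posterior distribution of `s` given the observation `Y = w` (Bayes' rule). -/
noncomputable def FinProb.posterior (μ : FinProb Ω) {S T : Type*} [DecidableEq S] [DecidableEq T]
    (s : Ω → S) (Y : Ω → T) (w : T) : S → ℝ :=
  fun v => μ.probEq (fun x => (s x, Y x)) (v, w) / μ.probEq Y w

theorem Finset.restrict₂_pair_injective_of_subset_union {ι : Type*} [DecidableEq ι]
    {π : ι → Type*} {s t u : Finset ι} (hs : s ⊆ u) (ht : t ⊆ u) (hu : u ⊆ s ∪ t) :
    (fun f : ∀ i : u, π i => (restrict₂ hs f, restrict₂ ht f)).Injective := by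
  intro f g hfg
  simp only [Prod.mk.injEq] at hfg
  funext ⟨i, hi⟩
  rcases mem_union.mp (hu hi) with his | hit
  · exact congrFun hfg.1 ⟨i, his⟩
  · exact congrFun hfg.2 ⟨i, hit⟩

theorem sub_le_mul_log_div {p q : ℝ} (hp : 0 ≤ p) (hq : 0 ≤ q) (hpq : q = 0 → p = 0) :
    p - q ≤ p * Real.log (p / q) := by
  rcases hq.eq_or_lt with rfl | hq
  · simp [hpq rfl]
  · have h := mul_nonneg hq.le (InformationTheory.klFun_nonneg (div_nonneg hp hq.le))
    rw [InformationTheory.klFun_apply] at h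
    field_simp at h
    linarith

theorem sum_sub_sum_le_klDiv {S : Type*} [Fintype S] {p q : S → ℝ} (hp : ∀ x, 0 ≤ p x)
    (hq : ∀ x, 0 ≤ q x) (hpq : ∀ x, q x = 0 → p x = 0) :
    ∑ x, p x - ∑ x, q x ≤ klDiv p q := by
  rw [← sum_sub_distrib]
  exact sum_le_sum fun x _ => sub_le_mul_log_div (hp x) (hq x) (hpq x)

theorem klDiv_self {S : Type*} [Fintype S] (p : S → ℝ) : klDiv p p = 0 :=
  sum_eq_zero fun x _ => by by_cases h : p x = 0 <;> simp [h]

namespace FinProb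

variable (μ : FinProb Ω)

theorem probEq_nonneg {S : Type*} [DecidableEq S] (X : Ω → S) (v : S) : 0 ≤ μ.probEq X v :=
  sum_nonneg fun a _ => by split_ifs <;> simp [μ.nonneg a]

theorem sum_probEq {S : Type*} [Fintype S] [DecidableEq S] (X : Ω → S) :
    ∑ v, μ.probEq X v = 1 := by
  simp only [probEq]
  rw [sum_comm]
  simp [μ.sum_one]

theorem sum_probEq_pair_fst {S T : Type*} [Fintype S] [DecidableEq S] [DecidableEq T]
    (X : Ω → S) (Y : Ω → T) (y : T) :
    ∑ x, μ.probEq (fun a => (X a, Y a)) (x, y) = μ.probEq Y y := by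
  simp only [probEq, Prod.mk.injEq]
  rw [sum_comm]
  refine sum_congr rfl fun a _ => ?_
  by_cases h : Y a = y <;> simp [h]

theorem probEq_eq_sum_fiber {S T : Type*} [Fintype S] [DecidableEq S] [DecidableEq T]
    {X : Ω → S} {Y : Ω → T} {g : S → T} (hY : ∀ a, Y a = g (X a)) (t : T) :
    μ.probEq Y t = ∑ v with g v = t, μ.probEq X v := by
  simp only [probEq]
  rw [sum_comm]
  refine sum_congr rfl fun a _ => ?_
  simp [hY]

theorem probEq_le_probEq_of_determined {S T : Type*} [Fintype S] [DecidableEq S] [DecidableEq T]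
    {X : Ω → S} {Y : Ω → T} {g : S → T} (hY : ∀ a, Y a = g (X a)) (v : S) :
    μ.probEq X v ≤ μ.probEq Y (g v) := by
  rw [μ.probEq_eq_sum_fiber hY]
  exact single_le_sum (fun w _ => μ.probEq_nonneg X w) (by simp)

theorem probEq_of_injective {S T : Type*} [DecidableEq S] [DecidableEq T]
    {X : Ω → S} {Y : Ω → T} {g : S → T} (hg : g.Injective) (hY : ∀ a, Y a = g (X a))
    (v : S) : μ.probEq Y (g v) = μ.probEq X v := by
  simp only [probEq, hY, hg.eq_iff]

theorem entropy_eq_of_determined {S T : Type*} [Fintype S] [DecidableEq S] [Fintype T]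
    [DecidableEq T] {X : Ω → S} {Y : Ω → T} {g : S → T} (hY : ∀ a, Y a = g (X a)) :
    μ.entropy Y = -∑ v, μ.probEq X v * Real.log (μ.probEq Y (g v)) := by
  rw [← sum_fiberwise univ g, entropy, ← sum_neg_distrib]
  refine sum_congr rfl fun t _ => ?_
  rw [sum_congr rfl fun v hv => by rw [(mem_filter.mp hv).2], ← sum_mul,
    ← μ.probEq_eq_sum_fiber hY, Real.negMulLog, neg_mul]

theorem entropy_eq_neg_sum {S : Type*} [Fintype S] [DecidableEq S] (X : Ω → S) :
    μ.entropy X = -∑ v, μ.probEq X v * Real.log (μ.probEq X v) :=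
  μ.entropy_eq_of_determined (g := id) fun _ => rfl

theorem entropy_eq_of_injective {S T : Type*} [Fintype S] [DecidableEq S] [Fintype T]
    [DecidableEq T] {X : Ω → S} {Y : Ω → T} {g : S → T} (hg : g.Injective)
    (hY : ∀ a, Y a = g (X a)) : μ.entropy Y = μ.entropy X := by
  simp only [μ.entropy_eq_of_determined hY, μ.probEq_of_injective hg hY, entropy_eq_neg_sum]

theorem entropy_pair_of_determined {S T : Type*} [Fintype S] [DecidableEq S] [Fintype T]
    [DecidableEq T] {X : Ω → S} {Y : Ω → T} {g : S → T} (hY : ∀ a, Y a = g (X a)) :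
    μ.entropy (fun a => (X a, Y a)) = μ.entropy X :=
  μ.entropy_eq_of_injective (g := fun v => (v, g v)) (fun _ _ h => congrArg Prod.fst h)
    fun a => by rw [hY]

theorem entropy_pair_comm {S T : Type*} [Fintype S] [DecidableEq S] [Fintype T] [DecidableEq T]
    (X : Ω → S) (Y : Ω → T) :
    μ.entropy (fun a => (X a, Y a)) = μ.entropy (fun a => (Y a, X a)) :=
  μ.entropy_eq_of_injective Prod.swap_injective fun _ => rfl

theorem entropy_of_unique {T : Type*} [Fintype T] [DecidableEq T] [Unique T] (Y : Ω → T) :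
    μ.entropy Y = 0 := by
  have h := μ.sum_probEq Y
  rw [Fintype.sum_unique] at h
  rw [entropy, Fintype.sum_unique, h, Real.negMulLog_one]

variable {S T U : Type*} [Fintype S] [DecidableEq S] [Fintype T] [DecidableEq T]
  [Fintype U] [DecidableEq U]

noncomputable def condMutualInfo (X : Ω → S) (Y : Ω → T) (Z : Ω → U) : ℝ :=
  μ.entropy (fun a => (X a, Z a)) + μ.entropy (fun a => (Y a, Z a)) -
    μ.entropy (fun a => (X a, Y a, Z a)) - μ.entropy Z

/-- The law `P(z) P(x | z) P(y | z)` that `(X, Y, Z)` would have if `X` and `Y` were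
conditionally independent given `Z`. -/
noncomputable def condIndepLaw (X : Ω → S) (Y : Ω → T) (Z : Ω → U) : S × T × U → ℝ :=
  fun v => μ.probEq (fun a => (X a, Z a)) (v.1, v.2.2) * μ.probEq (fun a => (Y a, Z a)) v.2 /
    μ.probEq Z v.2.2

theorem sum_condIndepLaw (X : Ω → S) (Y : Ω → T) (Z : Ω → U) :
    ∑ v, μ.condIndepLaw X Y Z v = 1 := by
  calc ∑ v, μ.condIndepLaw X Y Z v
      = ∑ z, (∑ x, μ.probEq (fun a => (X a, Z a)) (x, z)) *
          (∑ y, μ.probEq (fun a => (Y a, Z a)) (y, z)) / μ.probEq Z z := by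
        simp only [condIndepLaw, Fintype.sum_prod_type, sum_mul_sum, sum_div]
        exact (sum_congr rfl fun _ _ => sum_comm).trans sum_comm
    _ = ∑ z, μ.probEq Z z := by simp only [sum_probEq_pair_fst, mul_self_div_self]
    _ = 1 := μ.sum_probEq Z

theorem condMutualInfo_eq_klDiv (X : Ω → S) (Y : Ω → T) (Z : Ω → U) :
    μ.condMutualInfo X Y Z =
      klDiv (μ.probEq fun a => (X a, Y a, Z a)) (μ.condIndepLaw X Y Z) := by
  set V := fun a => (X a, Y a, Z a)
  have hXZ := μ.probEq_le_probEq_of_determined (X := V) (g := fun v => (v.1, v.2.2)) fun _ => rfl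
  have hYZ := μ.probEq_le_probEq_of_determined (X := V) (g := Prod.snd) fun _ => rfl
  have hZ := μ.probEq_le_probEq_of_determined (X := V) (g := fun v => v.2.2) fun _ => rfl
  have term : ∀ v, μ.probEq V v * Real.log (μ.probEq V v / μ.condIndepLaw X Y Z v) =
      μ.probEq V v * Real.log (μ.probEq V v) + μ.probEq V v * Real.log (μ.probEq Z v.2.2) -
        μ.probEq V v * Real.log (μ.probEq (fun a => (X a, Z a)) (v.1, v.2.2)) -
        μ.probEq V v * Real.log (μ.probEq (fun a => (Y a, Z a)) v.2) := by
    intro v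
    rcases (μ.probEq_nonneg V v).eq_or_lt with h | h
    · simp [← h]
    have hxz := h.trans_le (hXZ v)
    have hyz := h.trans_le (hYZ v)
    have hz := h.trans_le (hZ v)
    rw [condIndepLaw, Real.log_div h.ne' (by positivity), Real.log_div (by positivity) hz.ne',
      Real.log_mul hxz.ne' hyz.ne']
    ring
  rw [condMutualInfo,
    μ.entropy_eq_of_determined (X := V) (g := fun v => (v.1, v.2.2)) fun _ => rfl,
    μ.entropy_eq_of_determined (X := V) (g := Prod.snd) fun _ => rfl, entropy_eq_neg_sum,
    μ.entropy_eq_of_determined (X := V) (g := fun v => v.2.2) fun _ => rfl, klDiv,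
    sum_congr rfl fun v _ => term v]
  simp only [sum_add_distrib, sum_sub_distrib]
  ring

theorem condMutualInfo_nonneg (X : Ω → S) (Y : Ω → T) (Z : Ω → U) :
    0 ≤ μ.condMutualInfo X Y Z := by
  set V := fun a => (X a, Y a, Z a)
  have hXZ := μ.probEq_le_probEq_of_determined (X := V) (g := fun v => (v.1, v.2.2)) fun _ => rfl
  have hYZ := μ.probEq_le_probEq_of_determined (X := V) (g := Prod.snd) fun _ => rfl
  have hZ := μ.probEq_le_probEq_of_determined (X := V) (g := fun v => v.2.2) fun _ => rfl
  have hq : ∀ v, 0 ≤ μ.condIndepLaw X Y Z v := fun v =>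
    div_nonneg (mul_nonneg (μ.probEq_nonneg _ _) (μ.probEq_nonneg _ _)) (μ.probEq_nonneg _ _)
  have hpq : ∀ v, μ.condIndepLaw X Y Z v = 0 → μ.probEq V v = 0 := by
    intro v hv
    simp only [condIndepLaw, div_eq_zero_iff, mul_eq_zero] at hv
    refine le_antisymm ?_ (μ.probEq_nonneg V v)
    rcases hv with (h | h) | h
    exacts [h ▸ hXZ v, h ▸ hYZ v, h ▸ hZ v]
  have := sum_sub_sum_le_klDiv (μ.probEq_nonneg V) hq hpq
  rw [μ.sum_probEq, μ.sum_condIndepLaw, sub_self] at this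
  rwa [condMutualInfo_eq_klDiv]

def CondIndep (X : Ω → S) (Y : Ω → T) (Z : Ω → U) : Prop :=
  ∀ x y z, μ.probEq (fun a => (X a, Y a, Z a)) (x, y, z) * μ.probEq Z z =
    μ.probEq (fun a => (X a, Z a)) (x, z) * μ.probEq (fun a => (Y a, Z a)) (y, z)

theorem condMutualInfo_eq_zero_of_condIndep {X : Ω → S} {Y : Ω → T} {Z : Ω → U}
    (h : μ.CondIndep X Y Z) : μ.condMutualInfo X Y Z = 0 := by
  set V := fun a => (X a, Y a, Z a)
  have hZ := μ.probEq_le_probEq_of_determined (X := V) (g := fun v => v.2.2) fun _ => rfl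
  have hlaw : μ.condIndepLaw X Y Z = μ.probEq V := by
    funext ⟨x, y, z⟩
    rcases (μ.probEq_nonneg Z z).eq_or_lt with hz | hz
    · rw [condIndepLaw, ← hz, div_zero]
      exact (le_antisymm (hz ▸ hZ (x, y, z)) (μ.probEq_nonneg V _)).symm
    · rw [condIndepLaw, ← h, mul_div_cancel_right₀ _ hz.ne']
  rw [condMutualInfo_eq_klDiv, hlaw, klDiv_self]

theorem condEntropy_le_of_determined (X : Ω → S) {Y : Ω → T} {Z : Ω → U} {g : T → U}
    (hZ : ∀ a, Z a = g (Y a)) : μ.condEntropy X Y ≤ μ.condEntropy X Z := by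
  have hYZ : μ.entropy (fun a => (Y a, Z a)) = μ.entropy Y := μ.entropy_pair_of_determined hZ
  have hXYZ : μ.entropy (fun a => (X a, Y a, Z a)) = μ.entropy (fun a => (X a, Y a)) :=
    μ.entropy_eq_of_injective (g := fun w => (w.1, w.2, g w.2))
      (fun _ _ h => by simp only [Prod.mk.injEq] at h; exact Prod.ext h.1 h.2.1)
      fun a => by rw [hZ]
  have := μ.condMutualInfo_nonneg X Y Z
  rw [condMutualInfo, hYZ, hXYZ] at this
  rw [condEntropy, condEntropy]
  linarith

theorem mutualInfo_le_of_determined (X : Ω → S) {Y : Ω → T} {Z : Ω → U} {g : T → U}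
    (hZ : ∀ a, Z a = g (Y a)) : μ.mutualInfo X Z ≤ μ.mutualInfo X Y :=
  sub_le_sub_left (μ.condEntropy_le_of_determined X hZ) _

theorem mutualInfo_eq_of_injective (X : Ω → S) {Y : Ω → T} {Z : Ω → U} {g : T → U}
    (hg : g.Injective) (hZ : ∀ a, Z a = g (Y a)) : μ.mutualInfo X Z = μ.mutualInfo X Y := by
  have hXZ : μ.entropy (fun a => (X a, Z a)) = μ.entropy (fun a => (X a, Y a)) :=
    μ.entropy_eq_of_injective (g := Prod.map id g) (Function.injective_id.prodMap hg)
      fun a => by rw [hZ]; rfl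
  rw [mutualInfo, condEntropy, hXZ, μ.entropy_eq_of_injective hg hZ, mutualInfo, condEntropy]

theorem mutualInfo_of_unique [Unique T] (X : Ω → S) (Y : Ω → T) : μ.mutualInfo X Y = 0 := by
  rw [mutualInfo, condEntropy, μ.entropy_pair_of_determined (Y := Y) (g := fun _ => default)
    fun _ => Unique.eq_default _, μ.entropy_of_unique Y]
  ring

theorem mutualInfo_pair_sub_mutualInfo_of_condIndep {A : Ω → S} {B : Ω → T} {s : Ω → U}
    (h : μ.CondIndep A B s) :
    μ.mutualInfo s (fun a => (A a, B a)) - μ.mutualInfo s B =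
      μ.condEntropy A B - μ.condEntropy A s := by
  have hsAB : μ.entropy (fun a => (s a, A a, B a)) = μ.entropy (fun a => (A a, B a, s a)) :=
    μ.entropy_eq_of_injective (g := fun v => (v.2.2, v.1, v.2.1))
      (fun _ _ h => by simp only [Prod.mk.injEq] at h; ext <;> simp [h]) fun _ => rfl
  have := μ.condMutualInfo_eq_zero_of_condIndep h
  rw [condMutualInfo] at this
  simp only [mutualInfo, condEntropy, hsAB, μ.entropy_pair_comm s B]
  linarith

end FinProb

/-- For mutually conditionally independent observations `ω^1,…,ω^n` given `s`,
the set function `f(ι) = I(s; ∪_{i∈ι} ω^i)` satisfies `f(∅) = 0`, is monotone nondecreasing,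
and is submodular on subsets of `{1,…,n}`. -/
theorem mutualInfo_normalized_monotone_submodular
    {Ω : Type*} [Fintype Ω] (μ : FinProb Ω)
    {S : Type*} [Fintype S] [DecidableEq S]
    {n : ℕ} {W : Fin n → Type*} [∀ i, Fintype (W i)] [∀ i, DecidableEq (W i)]
    (s : Ω → S) (ωs : ∀ i, Ω → W i)
    (hindep : CondIndepGiven μ s ωs) :
    μ.mutualInfo s (tupleRV ωs (∅ : Finset (Fin n))) = 0 ∧
      (∀ ι₁ ι₂ : Finset (Fin n), ι₁ ⊆ ι₂ →
        μ.mutualInfo s (tupleRV ωs ι₁) ≤ μ.mutualInfo s (tupleRV ωs ι₂)) ∧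
      (∀ ι₁ ι₂ : Finset (Fin n), ι₁ ⊆ ι₂ → ι₂ ⊂ Finset.univ → ∀ j ∉ ι₂,
        μ.mutualInfo s (tupleRV ωs (insert j ι₁)) - μ.mutualInfo s (tupleRV ωs ι₁) ≥
          μ.mutualInfo s (tupleRV ωs (insert j ι₂)) - μ.mutualInfo s (tupleRV ωs ι₂)) := by
  have restrict_tuple {ι₁ ι₂ : Finset (Fin n)} (h : ι₁ ⊆ ι₂) (a : Ω) :
      tupleRV ωs ι₁ a = restrict₂ h (tupleRV ωs ι₂ a) := rfl
  have gain (j : Fin n) (ι : Finset (Fin n)) (hj : j ∉ ι) :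
      μ.mutualInfo s (tupleRV ωs (insert j ι)) - μ.mutualInfo s (tupleRV ωs ι) =
        μ.condEntropy (tupleRV ωs {j}) (tupleRV ωs ι) - μ.condEntropy (tupleRV ωs {j}) s := by
    rw [← μ.mutualInfo_eq_of_injective s (restrict₂_pair_injective_of_subset_union
      (singleton_subset_iff.2 (mem_insert_self j ι)) (subset_insert j ι) (insert_eq j ι).le)
      fun _ => rfl]
    exact μ.mutualInfo_pair_sub_mutualInfo_of_condIndep
      (hindep {j} ι (disjoint_singleton_left.2 hj))
  refine ⟨μ.mutualInfo_of_unique s _, fun ι₁ ι₂ h => μ.mutualInfo_le_of_determined s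
    (restrict_tuple h), fun ι₁ ι₂ h _ j hj => ?_⟩
  rw [gain j ι₁ fun hj₁ => hj (h hj₁), gain j ι₂ hj]
  exact sub_le_sub_right (μ.condEntropy_le_of_determined _ (restrict_tuple h)) _
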